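/- Moyal's identity: for Schwartz functions f₁, g₁, f₂, g₂ : ℝ → ℂ, ⟨W(f₁,g₁), W(f₂,g₂)⟩_{L²(ℝ²)} = conj(⟨f₁,f₂⟩) · ⟨g₁,g₂⟩. -/

import Mathlib

open MeasureTheory

/-- One-dimensional Wigner transform. -/
noncomputable def Wig (f g : ℝ → ℂ) (x ξ : ℝ) : ℂ :=
  (Real.sqrt (2 * Real.pi) : ℂ)⁻¹ *
    ∫ p : ℝ, Complex.exp (Complex.I * p * ξ) *
      (starRingEnd ℂ) (f ((x + p) / Real.sqrt 2)) * g ((x - p) / Real.sqrt 2)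

/-- Extended Wigner transform of a function of two variables. -/
noncomputable def ExtW (F : ℝ → ℝ → ℂ) (x ξ : ℝ) : ℂ :=
  (Real.sqrt (2 * Real.pi) : ℂ)⁻¹ *
    ∫ p : ℝ, Complex.exp (Complex.I * p * ξ) *
      F ((x + p) / Real.sqrt 2) ((x - p) / Real.sqrt 2)

/-- The n-th Hermite function. -/
noncomputable def hermiteFun (n : ℕ) (x : ℝ) : ℝ :=
  Real.pi ^ (-(1/4 : ℝ)) * ((Nat.factorial n : ℝ)) ^ (-(1/2 : ℝ)) *
    (2 : ℝ) ^ (-(n : ℝ)/2) * (-1 : ℝ)^n * Real.exp (x^2/2) *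
    iteratedDeriv n (fun t => Real.exp (-t^2)) x

/-- Generalized Laguerre polynomial via the Rodrigues formula. -/
noncomputable def lagPoly (n α : ℕ) (x : ℝ) : ℝ :=
  Real.exp x / (Nat.factorial n * x ^ α) *
    iteratedDeriv n (fun t => Real.exp (-t) * t ^ (n + α)) x

/-- Two-dimensional Wigner transform. -/
noncomputable def Wig2 (f g : ℝ × ℝ → ℂ) (x ξ : ℝ × ℝ) : ℂ :=
  (2 * Real.pi : ℂ)⁻¹ * ∫ p : ℝ × ℝ,
    Complex.exp (Complex.I * (p.1 * ξ.1 + p.2 * ξ.2)) *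
    (starRingEnd ℂ) (f ((x.1 + p.1) / Real.sqrt 2, (x.2 + p.2) / Real.sqrt 2)) *
    g ((x.1 - p.1) / Real.sqrt 2, (x.2 - p.2) / Real.sqrt 2)

/-! For fixed `x`, the function `ξ ↦ W(f,g)(x,ξ)` is, up to the factor `(2π)^{-1/2}` and the
rescaling `ξ ↦ -ξ/2π`, the Fourier transform of the kernel `p ↦ conj f((x+p)/√2) g((x-p)/√2)`,
so Plancherel turns the `ξ`-integral into the integral of a product of two such kernels. That
product is `(conj f₂ f₁)((x+p)/√2) · (conj g₁ g₂)((x-p)/√2)`, and the rotation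
`(x,p) ↦ ((x+p)/√2, (x-p)/√2)` of the plane separates its double integral into
`conj⟨f₁,f₂⟩ ⟨g₁,g₂⟩`. The inner integral over `p` is a rescaled convolution, so the rotation
reduces to `∫ (F ⋆ G) = ∫ F · ∫ G`. -/

open Real FourierTransform SchwartzMap ComplexConjugate Convolution

noncomputable section

namespace SchwartzMap

variable {F : Type*} [NormedAddCommGroup F] [NormedSpace ℝ F]

def compMulAdd (f : 𝓢(ℝ, F)) {a : ℝ} (ha : a ≠ 0) (b : ℝ) : 𝓢(ℝ, F) :=
  compCLMOfAntilipschitz ℝ (g := fun p => a * p + b) (by fun_prop)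
    ((isometry_add_right b).antilipschitz.comp (antilipschitzWith_mul_left ha)) f

@[simp]
lemma compMulAdd_apply (f : 𝓢(ℝ, F)) {a : ℝ} (ha : a ≠ 0) (b p : ℝ) :
    f.compMulAdd ha b p = f (a * p + b) := rfl

end SchwartzMap

def conjMulCLM : ℂ →L[ℝ] ℂ →L[ℝ] ℂ :=
  (ContinuousLinearMap.mul ℝ ℂ).comp Complex.conjCLE.toContinuousLinearMap

@[simp]
lemma conjMulCLM_apply (z w : ℂ) : conjMulCLM z w = conj z * w := rfl

def wignerKernel (f g : 𝓢(ℝ, ℂ)) (x : ℝ) : 𝓢(ℝ, ℂ) :=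
  pairing conjMulCLM (f.compMulAdd (a := (√2)⁻¹) (by positivity) (x / √2))
    (g.compMulAdd (a := -(√2)⁻¹) (by simp) (x / √2))

lemma wignerKernel_apply (f g : 𝓢(ℝ, ℂ)) (x p : ℝ) :
    wignerKernel f g x p = conj (f ((x + p) / √2)) * g ((x - p) / √2) := by
  simp only [wignerKernel, pairing_apply_apply, compMulAdd_apply, conjMulCLM_apply]
  ring_nf

lemma wig_eq_fourier_wignerKernel (f g : 𝓢(ℝ, ℂ)) (x ξ : ℝ) :
    Wig f g x ξ = (√(2 * π) : ℂ)⁻¹ * 𝓕 (wignerKernel f g x) (-(2 * π)⁻¹ * ξ) := by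
  rw [fourier_coe, Real.fourier_real_eq_integral_exp_smul, Wig]
  congr 1
  congr 1 with p
  rw [wignerKernel_apply, smul_eq_mul, ← mul_assoc]
  congr 3
  push_cast
  field_simp

lemma integral_conj_wig_mul_wig (f₁ g₁ f₂ g₂ : 𝓢(ℝ, ℂ)) (x : ℝ) :
    ∫ ξ, conj (Wig f₁ g₁ x ξ) * Wig f₂ g₂ x ξ =
      ∫ p, conj (wignerKernel f₁ g₁ x p) * wignerKernel f₂ g₂ x p := by
  set Φ : ℝ → ℂ := fun u => conj (𝓕 (wignerKernel f₁ g₁ x) u) * 𝓕 (wignerKernel f₂ g₂ x) u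
  have hc : conj (√(2 * π) : ℂ)⁻¹ * (√(2 * π) : ℂ)⁻¹ = ((2 * π : ℝ) : ℂ)⁻¹ := by
    rw [map_inv₀, Complex.conj_ofReal, ← mul_inv, ← Complex.ofReal_mul,
      Real.mul_self_sqrt (by positivity)]
  calc _ = ∫ ξ, ((2 * π : ℝ) : ℂ)⁻¹ * Φ (-(2 * π)⁻¹ * ξ) := by
          congr 1 with ξ
          simp only [wig_eq_fourier_wignerKernel, map_mul, ← hc, Φ]
          ring
    _ = ∫ u, Φ u := by
          rw [integral_const_mul, Measure.integral_comp_mul_left, Complex.real_smul]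
          field_simp
          simp [pi_pos.le]
    _ = _ := by
          simpa only [Φ, RCLike.inner_apply, mul_comm] using
            integral_inner_fourier_fourier (wignerKernel f₁ g₁ x) (wignerKernel f₂ g₂ x)

section Rotation

variable {𝕜 : Type*} [RCLike 𝕜]

lemma integral_mul_comp_rotation_eq_convolution (F G : ℝ → 𝕜) (x : ℝ) :
    ∫ p, F ((x + p) / √2) * G ((x - p) / √2) =
      √2 • (F ⋆[ContinuousLinearMap.mul 𝕜 𝕜] G) (√2 * x) := by
  have h2 : √2 ^ 2 = 2 := Real.sq_sqrt zero_le_two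
  have hsub : ∀ p, (x - p) / √2 = √2 * x - (x + p) / √2 := fun p => by
    field_simp
    linear_combination -x * h2
  simp_rw [hsub]
  rw [integral_add_left_eq_self (fun p => F (p / √2) * G (√2 * x - p / √2)),
    Measure.integral_comp_div (fun t => F t * G (√2 * x - t)), abs_of_pos (by positivity)]
  rfl

lemma integral_integral_mul_comp_rotation {F G : ℝ → 𝕜} (hF : Integrable F) (hG : Integrable G) :
    ∫ x, ∫ p, F ((x + p) / √2) * G ((x - p) / √2) = (∫ t, F t) * ∫ t, G t := by
  simp_rw [integral_mul_comp_rotation_eq_convolution]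
  rw [integral_smul, Measure.integral_comp_mul_left, integral_convolution _ hF hG, smul_smul,
    abs_inv, abs_of_pos (by positivity), mul_inv_cancel₀ (by positivity), one_smul]
  rfl

end Rotation

end

/-- Moyal's identity. -/
theorem moyal_identity (f₁ g₁ f₂ g₂ : SchwartzMap ℝ ℂ) :
    (∫ x : ℝ, ∫ ξ : ℝ, (starRingEnd ℂ) (Wig (⇑f₁) (⇑g₁) x ξ) * Wig (⇑f₂) (⇑g₂) x ξ)
      = (starRingEnd ℂ) (∫ t : ℝ, (starRingEnd ℂ) (f₁ t) * f₂ t) *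
        ∫ t : ℝ, (starRingEnd ℂ) (g₁ t) * g₂ t := by
  have hf : Integrable fun t => conj (f₂ t) * f₁ t := (pairing conjMulCLM f₂ f₁).integrable
  have hg : Integrable fun t => conj (g₁ t) * g₂ t := (pairing conjMulCLM g₁ g₂).integrable
  calc _ = ∫ x, ∫ p, conj (f₂ ((x + p) / √2)) * f₁ ((x + p) / √2) *
          (conj (g₁ ((x - p) / √2)) * g₂ ((x - p) / √2)) := by
        congr 1 with x
        rw [integral_conj_wig_mul_wig]
        congr 1 with p
        simp only [wignerKernel_apply, map_mul, Complex.conj_conj]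
        ring
    _ = (∫ t, conj (f₂ t) * f₁ t) * ∫ t, conj (g₁ t) * g₂ t :=
        integral_integral_mul_comp_rotation hf hg
    _ = _ := by
        rw [← integral_conj]
        simp only [map_mul, Complex.conj_conj, mul_comm]
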